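/- arXiv:2109.08644 — 7 statements merged into one kernel-verified Lean document; each statement's English description precedes it below -/
import Mathlib

section
/- For two agents with additive valuations, any MMS allocation (where each agent receives value at least her maximin share μ_i(2, M)) is also an EFX allocation. -/
/-- The maximin share for two agents: maximum over bipartitions of all goods of the
minimum of the two bundle values. -/
noncomputable def mms2 {G : Type} [Fintype G] [DecidableEq G] (v : G → ℝ) : ℝ :=
  sSup {x : ℝ | ∃ S : Finset G, x = min (∑ g ∈ S, v g) (∑ g ∈ Sᶜ, v g)}

lemma le_mms2 {G : Type} [Fintype G] [DecidableEq G] (v : G → ℝ) (S : Finset G) :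
    min (∑ g ∈ S, v g) (∑ g ∈ Sᶜ, v g) ≤ mms2 v := by
  have hset : {x : ℝ | ∃ S : Finset G, x = min (∑ g ∈ S, v g) (∑ g ∈ Sᶜ, v g)}
      = Set.range (fun S : Finset G => min (∑ g ∈ S, v g) (∑ g ∈ Sᶜ, v g)) := by
    ext x; simp [eq_comm]
  unfold mms2
  apply le_csSup
  · rw [hset]; exact (Set.finite_range _).bddAbove
  · exact ⟨S, rfl⟩

/-- For two agents, any MMS allocation is EFX. -/
theorem mms_imp_efx_two_agents {G : Type} [Fintype G] [DecidableEq G]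
    (v₁ v₂ : G → ℝ) (hv₁ : ∀ g, 0 ≤ v₁ g) (hv₂ : ∀ g, 0 ≤ v₂ g)
    (A : Finset G)
    (hmms₁ : mms2 v₁ ≤ ∑ g ∈ A, v₁ g)
    (hmms₂ : mms2 v₂ ≤ ∑ g ∈ Aᶜ, v₂ g) :
    (∀ g ∈ Aᶜ, 0 < v₁ g → ∑ x ∈ Aᶜ.erase g, v₁ x ≤ ∑ x ∈ A, v₁ x) ∧
    (∀ g ∈ A, 0 < v₂ g → ∑ x ∈ A.erase g, v₂ x ≤ ∑ x ∈ Aᶜ, v₂ x) := by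
  constructor
  · intro g hg hpos
    have hgnA : g ∉ A := by simpa using (Finset.mem_compl.mp hg)
    have hcompl : (insert g A)ᶜ = Aᶜ.erase g := by
      ext x; simp [Finset.mem_erase, and_comm, eq_comm]
    have h := le_mms2 v₁ (insert g A)
    rw [hcompl] at h
    have h2 : min (∑ x ∈ insert g A, v₁ x) (∑ x ∈ Aᶜ.erase g, v₁ x) ≤ ∑ x ∈ A, v₁ x :=
      h.trans hmms₁
    rcases min_le_iff.mp (le_refl (min (∑ x ∈ insert g A, v₁ x) (∑ x ∈ Aᶜ.erase g, v₁ x))) with _ | _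
    all_goals {
      rcases min_cases (∑ x ∈ insert g A, v₁ x) (∑ x ∈ Aᶜ.erase g, v₁ x) with ⟨heq, _⟩ | ⟨heq, _⟩
      · rw [heq, Finset.sum_insert hgnA] at h2; linarith
      · rw [heq] at h2; exact h2 }
  · intro g hg hpos
    have hgnc : g ∉ Aᶜ := by simp [hg]
    have hcompl : (A.erase g)ᶜ = insert g Aᶜ := by
      ext x; simp [Finset.mem_erase]
    have h := le_mms2 v₂ (A.erase g)
    rw [hcompl] at h
    have h2 : min (∑ x ∈ A.erase g, v₂ x) (∑ x ∈ insert g Aᶜ, v₂ x) ≤ ∑ x ∈ Aᶜ, v₂ x :=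
      h.trans hmms₂
    rcases min_cases (∑ x ∈ A.erase g, v₂ x) (∑ x ∈ insert g Aᶜ, v₂ x) with ⟨heq, _⟩ | ⟨heq, _⟩
    · rw [heq] at h2; exact h2
    · rw [heq, Finset.sum_insert hgnc] at h2; linarith
end

section
/- For two agents with additive valuations, any EFX allocation is a (2/3)-MMS allocation, i.e., each agent i receives value at least (2/3)·μ_i(2, M). -/
lemma mms2_mem {G : Type} [Fintype G] [DecidableEq G] (v : G → ℝ) :
    ∃ S : Finset G, mms2 v = min (∑ g ∈ S, v g) (∑ g ∈ Sᶜ, v g) := by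
  have hset : {x : ℝ | ∃ S : Finset G, x = min (∑ g ∈ S, v g) (∑ g ∈ Sᶜ, v g)} =
      Set.range (fun S : Finset G => min (∑ g ∈ S, v g) (∑ g ∈ Sᶜ, v g)) := by
    ext x; simp [eq_comm]
  have hfin : ({x : ℝ | ∃ S : Finset G, x = min (∑ g ∈ S, v g) (∑ g ∈ Sᶜ, v g)}).Finite := by
    rw [hset]; exact Set.finite_range _
  have hne : ({x : ℝ | ∃ S : Finset G, x = min (∑ g ∈ S, v g) (∑ g ∈ Sᶜ, v g)}).Nonempty :=
    ⟨_, ⟨∅, rfl⟩⟩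
  exact hne.csSup_mem hfin

lemma efx_key {G : Type} [Fintype G] [DecidableEq G] (v : G → ℝ) (hv : ∀ g, 0 ≤ v g)
    (B : Finset G)
    (hefx : ∀ g ∈ Bᶜ, 0 < v g → ∑ x ∈ Bᶜ.erase g, v x ≤ ∑ x ∈ B, v x) :
    (2 / 3) * mms2 v ≤ ∑ g ∈ B, v g := by
  by_contra h
  push_neg at h
  have hB0 : 0 ≤ ∑ g ∈ B, v g := Finset.sum_nonneg fun g _ => hv g
  have hμ : 0 < mms2 v := by linarith
  obtain ⟨S, hS⟩ := mms2_mem v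
  have hS1 : mms2 v ≤ ∑ g ∈ S, v g := hS ▸ min_le_left _ _
  have hS2 : mms2 v ≤ ∑ g ∈ Sᶜ, v g := hS ▸ min_le_right _ _
  -- find a positive good of Bᶜ in any side T with ∑ T ≥ μ
  have key : ∀ T : Finset G, mms2 v ≤ ∑ g ∈ T, v g → ∃ g ∈ T, g ∈ Bᶜ ∧ 0 < v g := by
    intro T hT
    have hsplit : ∑ g ∈ T ∩ B, v g + ∑ g ∈ T \ B, v g = ∑ g ∈ T, v g :=
      Finset.sum_inter_add_sum_sdiff T B v
    have hsub : ∑ g ∈ T ∩ B, v g ≤ ∑ g ∈ B, v g :=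
      Finset.sum_le_sum_of_subset_of_nonneg Finset.inter_subset_right (fun g _ _ => hv g)
    have hpos : 0 < ∑ g ∈ T \ B, v g := by linarith
    obtain ⟨g, hg, hgpos⟩ : ∃ g ∈ T \ B, 0 < v g := by
      by_contra hc
      push_neg at hc
      have : ∑ g ∈ T \ B, v g = 0 :=
        Finset.sum_eq_zero fun g hg => le_antisymm (hc g hg) (hv g)
      linarith
    rw [Finset.mem_sdiff] at hg
    exact ⟨g, hg.1, Finset.mem_compl.2 hg.2, hgpos⟩
  obtain ⟨g₁, hg₁S, hg₁B, hg₁pos⟩ := key S hS1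
  obtain ⟨g₂, hg₂S, hg₂B, hg₂pos⟩ := key Sᶜ hS2
  have hne : g₂ ≠ g₁ := by
    intro hEq; exact (Finset.mem_compl.1 hg₂S) (hEq ▸ hg₁S)
  have h1 : ∑ x ∈ Bᶜ.erase g₁, v x ≤ ∑ x ∈ B, v x := hefx g₁ hg₁B hg₁pos
  have h2 : v g₂ ≤ ∑ x ∈ Bᶜ.erase g₁, v x :=
    Finset.single_le_sum (fun g _ => hv g) (Finset.mem_erase.2 ⟨hne, hg₂B⟩)
  have h3 : v g₁ + ∑ x ∈ Bᶜ.erase g₁, v x = ∑ x ∈ Bᶜ, v x :=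
    Finset.add_sum_erase _ v hg₁B
  -- v g₁ ≤ ∑ B via EFX at g₂
  have h4 : ∑ x ∈ Bᶜ.erase g₂, v x ≤ ∑ x ∈ B, v x := hefx g₂ hg₂B hg₂pos
  have h5 : v g₁ ≤ ∑ x ∈ Bᶜ.erase g₂, v x :=
    Finset.single_le_sum (fun g _ => hv g) (Finset.mem_erase.2 ⟨hne.symm, hg₁B⟩)
  have htot : ∑ g ∈ S, v g + ∑ g ∈ Sᶜ, v g = ∑ g ∈ B, v g + ∑ g ∈ Bᶜ, v g := by
    rw [Finset.sum_add_sum_compl, Finset.sum_add_sum_compl]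
  linarith

/-- For two agents, any EFX allocation is a (2/3)-MMS allocation. -/
theorem efx_imp_two_thirds_mms {G : Type} [Fintype G] [DecidableEq G]
    (v₁ v₂ : G → ℝ) (hv₁ : ∀ g, 0 ≤ v₁ g) (hv₂ : ∀ g, 0 ≤ v₂ g)
    (A : Finset G)
    (hefx₁ : ∀ g ∈ Aᶜ, 0 < v₁ g → ∑ x ∈ Aᶜ.erase g, v₁ x ≤ ∑ x ∈ A, v₁ x)
    (hefx₂ : ∀ g ∈ A, 0 < v₂ g → ∑ x ∈ A.erase g, v₂ x ≤ ∑ x ∈ Aᶜ, v₂ x) :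
    (2 / 3) * mms2 v₁ ≤ ∑ g ∈ A, v₁ g ∧ (2 / 3) * mms2 v₂ ≤ ∑ g ∈ Aᶜ, v₂ g := by
  constructor
  · exact efx_key v₁ hv₁ A hefx₁
  · apply efx_key v₂ hv₂ Aᶜ
    simpa [compl_compl] using hefx₂
end

section
/- For two agents and m ≥ 4 goods, for every δ > 0 there exists an additive valuation instance and an EFX allocation in it that is not a (2/3 + δ)-MMS allocation. -/
/-- tightness of the 2/3-MMS guarantee of EFX allocations for two agents:
for any m ≥ 4 and δ > 0 there is an instance and an EFX allocation in it that is not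
(2/3 + δ)-MMS. -/
theorem efx_mms_two_thirds_tight (m : ℕ) (hm : 4 ≤ m) (δ : ℝ) (hδ : 0 < δ) :
    ∃ (v₁ v₂ : Fin m → ℝ) (A : Finset (Fin m)),
      (∀ g, 0 ≤ v₁ g) ∧ (∀ g, 0 ≤ v₂ g) ∧
      (∀ g ∈ Aᶜ, 0 < v₁ g → ∑ x ∈ Aᶜ.erase g, v₁ x ≤ ∑ x ∈ A, v₁ x) ∧
      (∀ g ∈ A, 0 < v₂ g → ∑ x ∈ A.erase g, v₂ x ≤ ∑ x ∈ Aᶜ, v₂ x) ∧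
      ((∑ g ∈ A, v₁ g < (2 / 3 + δ) * mms2 v₁) ∨
       (∑ g ∈ Aᶜ, v₂ g < (2 / 3 + δ) * mms2 v₂)) := by
  -- the instance: goods 0,1 have value 1, goods 2,3 have value 2, rest 0.
  set v : Fin m → ℝ := fun g => if g.val ≤ 1 then 1 else if g.val ≤ 3 then 2 else 0 with hv
  have a0 : Fin m := ⟨0, by omega⟩
  refine ⟨v, v, {⟨0, by omega⟩, ⟨1, by omega⟩}, ?_, ?_, ?_, ?_, ?_⟩
  · intro g; simp only [hv]; split_ifs <;> norm_num
  · intro g; simp only [hv]; split_ifs <;> norm_num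
  all_goals {
    have hne01 : (⟨0, by omega⟩ : Fin m) ≠ ⟨1, by omega⟩ := by simp [Fin.ext_iff]
    set A : Finset (Fin m) := {⟨0, by omega⟩, ⟨1, by omega⟩} with hA
    have hA2 : ∑ g ∈ A, v g = 2 := by
      rw [hA, Finset.sum_pair hne01]; simp [hv]; norm_num
    have htot : ∑ g, v g = 6 := by
      have hsub : ({⟨0, by omega⟩, ⟨1, by omega⟩, ⟨2, by omega⟩, ⟨3, by omega⟩} :
          Finset (Fin m)) ⊆ Finset.univ := Finset.subset_univ _
      rw [← Finset.sum_subset hsub]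
      · have : ∑ g ∈ ({⟨0, by omega⟩, ⟨1, by omega⟩, ⟨2, by omega⟩, ⟨3, by omega⟩} :
            Finset (Fin m)), v g = v ⟨0, by omega⟩ + v ⟨1, by omega⟩ + v ⟨2, by omega⟩
            + v ⟨3, by omega⟩ := by
          rw [Finset.sum_insert (by simp [Fin.ext_iff]),
            Finset.sum_insert (by simp [Fin.ext_iff]),
            Finset.sum_pair (by simp [Fin.ext_iff])]
          ring
        rw [this]; simp [hv]; norm_num
      · intro g _ hg
        simp only [Finset.mem_insert, Finset.mem_singleton, Fin.ext_iff] at hg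
        push_neg at hg
        simp only [hv]
        rw [if_neg (by omega), if_neg (by omega)]
    have hAc : ∑ g ∈ Aᶜ, v g = 4 := by
      have := Finset.sum_add_sum_compl A v
      rw [hA2, htot] at this; linarith
    first
    | -- EFX for agent 1
      (intro g hg hpos
       have hgA : g ∉ A := by simpa using hg
       have hg2 : v g = 2 := by
         simp only [hA, Finset.mem_insert, Finset.mem_singleton, Fin.ext_iff] at hgA
         push_neg at hgA
         simp only [hv] at hpos ⊢
         rw [if_neg (by omega)] at hpos ⊢
         by_cases h : g.val ≤ 3
         · rw [if_pos h]
         · rw [if_neg h] at hpos; norm_num at hpos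
       have := Finset.add_sum_erase _ v hg
       rw [hAc, hg2] at this
       rw [hA2]; linarith)
    | -- EFX for agent 2
      (intro g hg hpos
       have hgA := hg
       simp only [hA, Finset.mem_insert, Finset.mem_singleton, Fin.ext_iff] at hgA
       have hg1 : v g = 1 := by
         simp only [hv]; rw [if_pos (by omega)]
       have := Finset.add_sum_erase _ v hg
       rw [hA2] at this
       rw [hAc]
       linarith)
    | -- not (2/3+δ)-MMS for agent 1
      (left
       have hmms : (3 : ℝ) ≤ mms2 v := by
         apply le_csSup
         · refine ⟨6, ?_⟩
           rintro x ⟨S, rfl⟩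
           have h1 : ∑ g ∈ Sᶜ, v g ≤ 6 := by
             have := Finset.sum_add_sum_compl S v
             have hS0 : 0 ≤ ∑ g ∈ S, v g := Finset.sum_nonneg (fun g _ => by
               simp only [hv]; split_ifs <;> norm_num)
             rw [htot] at this; linarith
           exact le_trans (min_le_right _ _) h1
         · refine ⟨{⟨0, by omega⟩, ⟨2, by omega⟩}, ?_⟩
           have hS : ∑ g ∈ ({⟨0, by omega⟩, ⟨2, by omega⟩} : Finset (Fin m)), v g = 3 := by
             rw [Finset.sum_pair (by simp [Fin.ext_iff])]; simp [hv]; norm_num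
           have hSc : ∑ g ∈ ({⟨0, by omega⟩, ⟨2, by omega⟩} : Finset (Fin m))ᶜ, v g = 3 := by
             have := Finset.sum_add_sum_compl
               ({⟨0, by omega⟩, ⟨2, by omega⟩} : Finset (Fin m)) v
             rw [hS, htot] at this; linarith
           rw [hS, hSc, min_self]
       rw [hA2]
       nlinarith [hmms])
  }
end

section
/- For the Round-Robin mechanism with two agents, every pure Nash equilibrium bid profile induces an allocation that is EF1 with respect to the agents' true additive valuations. -/
open Finset

/-- Pick the available good with the highest bid, ties broken lexicographically
(i.e. in favor of the smaller index). -/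
noncomputable def rrPick {m : ℕ} (bid : Fin m → ℝ) (S : Finset (Fin m)) : Option (Fin m) :=
  if h : S.Nonempty then
    some (S.exists_max_image (fun g => toLex (bid g, OrderDual.toDual g)) h).choose
  else none

/-- The state of Round-Robin (available goods, partial allocation) after `t` picks:
at step `t` the active agent is `t % n` and she picks her highest-bid available good. -/
noncomputable def rrState (n : ℕ) [NeZero n] {m : ℕ} (b : Fin n → Fin m → ℝ) :
    ℕ → Finset (Fin m) × (Fin n → Finset (Fin m))
  | 0 => (Finset.univ, fun _ => ∅)
  | (t + 1) =>
    let p := rrState n b t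
    let i : Fin n := ⟨t % n, Nat.mod_lt t (Nat.pos_of_ne_zero (NeZero.ne n))⟩
    match rrPick (b i) p.1 with
    | none => p
    | some g => (p.1.erase g, Function.update p.2 i (insert g (p.2 i)))

/-- The allocation output by the Round-Robin mechanism on bid profile `b`. -/
noncomputable def roundRobin (n : ℕ) [NeZero n] {m : ℕ} (b : Fin n → Fin m → ℝ) :
    Fin n → Finset (Fin m) :=
  (rrState n b m).2

/-! If agent `i` bids her true valuation `w`, then in each round she picks a good of maximal
`w`-value among those left, in particular one worth at least the good `j` picks right after
her. Hence from any of her turns on she gains, by her own measure, at least as much as `j`.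
Bidding truthfully, agent 0 therefore gets at least half of `v 0 (M)`, and agent 1, whose
first turn comes after agent 0 has taken the good `c` of highest `b 0`-bid, at least half of
`v 1 (M \ {c})`. At an equilibrium each agent does at least as well as by bidding truthfully,
which gives envy-freeness for agent 0 and EF1, by removing `c`, for agent 1. -/

lemma exists_rrPick_eq_some {m : ℕ} (bid : Fin m → ℝ) {S : Finset (Fin m)} (hS : S.Nonempty) :
    ∃ g ∈ S, rrPick bid S = some g ∧ ∀ x ∈ S, bid x ≤ bid g := by
  obtain ⟨hmem, hmax⟩ :=
    (S.exists_max_image (fun g => toLex (bid g, OrderDual.toDual g)) hS).choose_spec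
  refine ⟨_, hmem, by rw [rrPick, dif_pos hS], fun x hx => ?_⟩
  rcases Prod.Lex.le_iff.1 (hmax x hx) with h | ⟨h, -⟩
  exacts [h.le, h.le]

section RoundRobin

open Function

variable {n m : ℕ} [NeZero n] (b : Fin n → Fin m → ℝ)

lemma rrState_succ_of_fst_eq_empty {t : ℕ} (h : (rrState n b t).1 = ∅) :
    rrState n b (t + 1) = rrState n b t := by
  rw [rrState]
  simp [h, rrPick]

lemma rrState_succ_of_rrPick_eq_some {t : ℕ} {g : Fin m}
    (h : rrPick (b (Fin.ofNat n t)) (rrState n b t).1 = some g) :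
    rrState n b (t + 1) = ((rrState n b t).1.erase g,
      update (rrState n b t).2 (Fin.ofNat n t) (insert g ((rrState n b t).2 (Fin.ofNat n t)))) := by
  rw [rrState]
  simp only [Fin.ofNat] at h ⊢
  simp [h]

lemma card_rrState_fst (t : ℕ) : #(rrState n b t).1 = m - t := by
  induction t with
  | zero => simp [rrState]
  | succ t ih =>
    obtain hS | hS := (rrState n b t).1.eq_empty_or_nonempty
    · have : m - t = 0 := by rw [← ih, hS, card_empty]
      rw [rrState_succ_of_fst_eq_empty b hS, ih]
      omega
    · obtain ⟨g, hg, hpick, -⟩ := exists_rrPick_eq_some (b (Fin.ofNat n t)) hS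
      rw [rrState_succ_of_rrPick_eq_some b hpick, card_erase_of_mem hg, ih]
      omega

lemma rrState_succ_of_le {t : ℕ} (h : m ≤ t) : rrState n b (t + 1) = rrState n b t := by
  have hS : (rrState n b t).1 = ∅ := card_eq_zero.1 (by rw [card_rrState_fst]; omega)
  exact rrState_succ_of_fst_eq_empty b hS

lemma rrState_eq_of_le {t : ℕ} (h : m ≤ t) : rrState n b t = rrState n b m := by
  induction t, h using Nat.le_induction with
  | base => rfl
  | succ t ht ih => rw [rrState_succ_of_le b ht, ih]

lemma rrState_fst_eq_empty : (rrState n b m).1 = ∅ :=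
  card_eq_zero.1 (by rw [card_rrState_fst, Nat.sub_self])

lemma exists_rrState_succ {t : ℕ} (h : t < m) :
    ∃ g ∈ (rrState n b t).1,
      (∀ x ∈ (rrState n b t).1, b (Fin.ofNat n t) x ≤ b (Fin.ofNat n t) g) ∧
      (rrState n b (t + 1)).1 = (rrState n b t).1.erase g ∧
      (rrState n b (t + 1)).2 = update (rrState n b t).2 (Fin.ofNat n t)
          (insert g ((rrState n b t).2 (Fin.ofNat n t))) := by
  have hS : (rrState n b t).1.Nonempty := by rw [← card_pos, card_rrState_fst]; omega
  obtain ⟨g, hg, hpick, hmax⟩ := exists_rrPick_eq_some (b (Fin.ofNat n t)) hS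
  rw [rrState_succ_of_rrPick_eq_some b hpick]
  exact ⟨g, hg, hmax, rfl, rfl⟩

lemma rrState_fst_succ_subset (t : ℕ) : (rrState n b (t + 1)).1 ⊆ (rrState n b t).1 := by
  obtain h | h := le_or_gt m t
  · rw [rrState_succ_of_le b h]
  obtain ⟨g, -, -, havail, -⟩ := exists_rrState_succ b h
  exact havail ▸ erase_subset _ _

lemma rrState_snd_succ_of_ne {t : ℕ} {k : Fin n} (hk : k ≠ Fin.ofNat n t) :
    (rrState n b (t + 1)).2 k = (rrState n b t).2 k := by
  obtain h | h := le_or_gt m t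
  · rw [rrState_succ_of_le b h]
  obtain ⟨g, -, -, -, hbundles⟩ := exists_rrState_succ b h
  rw [hbundles, update_of_ne hk]

lemma rrState_snd_mono (k : Fin n) : Monotone fun t => (rrState n b t).2 k := by
  refine monotone_nat_of_le_succ fun t => ?_
  obtain h | h := le_or_gt m t
  · rw [rrState_succ_of_le b h]
  obtain ⟨g, -, -, havail, hbundles⟩ := exists_rrState_succ b h
  rw [hbundles]
  rcases eq_or_ne k (Fin.ofNat n t) with rfl | hk
  · rw [update_self]
    exact subset_insert _ _
  · rw [update_of_ne hk]

lemma disjoint_rrState_fst_snd (t : ℕ) (k : Fin n) :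
    Disjoint (rrState n b t).1 ((rrState n b t).2 k) := by
  induction t with
  | zero => simp [rrState]
  | succ t ih =>
    obtain h | h := le_or_gt m t
    · rwa [rrState_succ_of_le b h]
    obtain ⟨g, -, -, havail, hbundles⟩ := exists_rrState_succ b h
    rw [havail, hbundles]
    refine disjoint_left.2 fun x hx hx' => ?_
    rw [mem_erase] at hx
    rcases eq_or_ne k (Fin.ofNat n t) with rfl | hk
    · rw [update_self, mem_insert] at hx'
      exact hx'.elim hx.1 (disjoint_left.1 ih hx.2)
    · rw [update_of_ne hk] at hx'
      exact disjoint_left.1 ih hx.2 hx'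

lemma pairwise_disjoint_rrState_snd (t : ℕ) : Pairwise (Disjoint on (rrState n b t).2) := by
  induction t with
  | zero => simp [rrState, Pairwise]
  | succ t ih =>
    obtain h | h := le_or_gt m t
    · rwa [rrState_succ_of_le b h]
    obtain ⟨g, hg, -, havail, hbundles⟩ := exists_rrState_succ b h
    have hfresh k : g ∉ (rrState n b t).2 k := disjoint_left.1 (disjoint_rrState_fst_snd b t k) hg
    rw [hbundles]
    intro k l hkl
    simp only [onFun, update_apply]
    split_ifs with hk hl hl
    · exact absurd (hk.trans hl.symm) hkl
    · exact disjoint_insert_left.2 ⟨hfresh l, ih (hk ▸ hkl)⟩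
    · exact disjoint_insert_right.2 ⟨hfresh k, ih (hl ▸ hkl)⟩
    · exact ih hkl

lemma exists_mem_rrState_snd {t : ℕ} {x : Fin m} (hx : x ∉ (rrState n b t).1) :
    ∃ k, x ∈ (rrState n b t).2 k := by
  induction t with
  | zero => simp [rrState] at hx
  | succ t ih =>
    obtain h | h := le_or_gt m t
    · rw [rrState_succ_of_le b h] at hx ⊢
      exact ih hx
    obtain ⟨g, -, -, havail, hbundles⟩ := exists_rrState_succ b h
    rw [havail] at hx
    rw [hbundles]
    rcases eq_or_ne x g with rfl | hxg
    · exact ⟨Fin.ofNat n t, by simp⟩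
    obtain ⟨k, hk⟩ := ih fun hx' => hx (mem_erase.2 ⟨hxg, hx'⟩)
    refine ⟨k, ?_⟩
    rcases eq_or_ne k (Fin.ofNat n t) with rfl | hk'
    · rw [update_self]
      exact mem_insert_of_mem hk
    · rwa [update_of_ne hk']

lemma exists_sum_rrState_snd_succ {t : ℕ} (h : t < m) (w : Fin m → ℝ) :
    ∃ g ∈ (rrState n b t).1,
      (∀ x ∈ (rrState n b t).1, b (Fin.ofNat n t) x ≤ b (Fin.ofNat n t) g) ∧
      ∑ x ∈ (rrState n b (t + 1)).2 (Fin.ofNat n t), w x =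
        ∑ x ∈ (rrState n b t).2 (Fin.ofNat n t), w x + w g := by
  obtain ⟨g, hg, hmax, -, hbundles⟩ := exists_rrState_succ b h
  refine ⟨g, hg, hmax, ?_⟩
  rw [hbundles, update_self, sum_insert (disjoint_left.1 (disjoint_rrState_fst_snd b t _) hg),
    add_comm]

lemma sum_sum_roundRobin (w : Fin m → ℝ) :
    ∑ k, ∑ x ∈ roundRobin n b k, w x = ∑ x, w x := by
  rw [roundRobin, ← sum_biUnion ((pairwise_disjoint_rrState_snd b m).set_pairwise _)]
  congr
  refine eq_univ_of_forall fun x => mem_biUnion.2 ?_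
  have hx : x ∉ (rrState n b m).1 := by simp [rrState_fst_eq_empty]
  obtain ⟨k, hk⟩ := exists_mem_rrState_snd b hx
  exact ⟨k, mem_univ k, hk⟩

lemma rrState_one_snd {c : Fin m} (hc : rrPick (b 0) univ = some c) :
    (rrState n b 1).2 = update (fun _ => ∅) 0 {c} := by
  rw [rrState_succ_of_rrPick_eq_some (t := 0) b hc]
  rfl

lemma mem_roundRobin_of_rrPick_univ {c : Fin m} (hc : rrPick (b 0) univ = some c) :
    c ∈ roundRobin n b 0 := by
  have hc1 : c ∈ (rrState n b 1).2 0 := by simp [rrState_one_snd b hc]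
  exact rrState_snd_mono b 0 c.pos hc1

end RoundRobin

section TwoAgents

open Function

variable {m : ℕ} (b : Fin 2 → Fin m → ℝ) (w : Fin m → ℝ)

noncomputable def rrLead (i j : Fin 2) (t : ℕ) : ℝ :=
  ∑ x ∈ (rrState 2 b t).2 i, w x - ∑ x ∈ (rrState 2 b t).2 j, w x

lemma Fin.ofNat_two_succ {t : ℕ} {i j : Fin 2} (ht : Fin.ofNat 2 t = i) (hji : j ≠ i) :
    Fin.ofNat 2 (t + 1) = j := by
  subst ht
  simp only [ne_eq, Fin.ext_iff, Fin.val_ofNat] at hji ⊢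
  omega

/-- `j`'s pick at time `t + 1` was still available to `i` at time `t`. -/
lemma rrLead_le_rrLead_add_two {i j : Fin 2} (hw : ∀ g, 0 ≤ w g) (hb : b i = w) (hji : j ≠ i)
    {t : ℕ} (ht : Fin.ofNat 2 t = i) : rrLead b w i j t ≤ rrLead b w i j (t + 2) := by
  obtain h | h := le_or_gt m t
  · rw [rrLead, rrLead, rrState_eq_of_le b h, rrState_eq_of_le b (by omega : m ≤ t + 2)]
  have ht' := Fin.ofNat_two_succ ht hji
  obtain ⟨g, -, hmax, hi⟩ := exists_sum_rrState_snd_succ b h w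
  have hj : (rrState 2 b (t + 1)).2 j = (rrState 2 b t).2 j :=
    rrState_snd_succ_of_ne b (ht ▸ hji)
  rw [ht, hb] at hmax
  rw [ht] at hi
  obtain h' | h' := le_or_gt m (t + 1)
  · rw [rrLead, rrLead, rrState_succ_of_le b h', hi, hj]
    linarith [hw g]
  obtain ⟨g', hg', -, hj'⟩ := exists_sum_rrState_snd_succ b h' w
  have hi' : (rrState 2 b (t + 2)).2 i = (rrState 2 b (t + 1)).2 i :=
    rrState_snd_succ_of_ne b (ht' ▸ hji.symm)
  have hgg' : w g' ≤ w g := hmax g' (rrState_fst_succ_subset b t hg')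
  rw [ht'] at hj'
  rw [rrLead, rrLead, hi', hj', hi, hj]
  linarith

lemma rrLead_le_rrLead_final {i j : Fin 2} (hw : ∀ g, 0 ≤ w g) (hb : b i = w) (hji : j ≠ i)
    {t : ℕ} (ht : Fin.ofNat 2 t = i) : rrLead b w i j t ≤ rrLead b w i j m := by
  have hround (k : ℕ) : rrLead b w i j t ≤ rrLead b w i j (t + 2 * k) := by
    induction k with
    | zero => rfl
    | succ k ih =>
      refine ih.trans (rrLead_le_rrLead_add_two b w hw hb hji ?_)
      rw [← ht]
      simp [Fin.ext_iff]
  have hfinal : rrLead b w i j (t + 2 * m) = rrLead b w i j m := by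
    rw [rrLead, rrLead, rrState_eq_of_le b (by omega : m ≤ t + 2 * m)]
  exact hfinal ▸ hround m

lemma sum_roundRobin_one_le_sum_roundRobin_zero (hw : ∀ g, 0 ≤ w g) (hb : b 0 = w) :
    ∑ x ∈ roundRobin 2 b 1, w x ≤ ∑ x ∈ roundRobin 2 b 0, w x := by
  simpa [rrLead, rrState, roundRobin] using
    rrLead_le_rrLead_final b w hw hb (j := 1) (by decide) (t := 0) rfl

lemma sum_roundRobin_zero_le_sum_roundRobin_one_add (hw : ∀ g, 0 ≤ w g) (hb : b 1 = w)
    {c : Fin m} (hc : rrPick (b 0) univ = some c) :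
    ∑ x ∈ roundRobin 2 b 0, w x ≤ ∑ x ∈ roundRobin 2 b 1, w x + w c := by
  simpa [rrLead, rrState_one_snd b hc, roundRobin] using
    rrLead_le_rrLead_final b w hw hb (j := 0) (by decide) (t := 1) rfl

end TwoAgents

theorem roundRobin_two_agents_PNE_EF1_general {m : ℕ} (v b : Fin 2 → Fin m → ℝ)
    (hv : ∀ i g, 0 ≤ v i g)
    (hPNE : ∀ i : Fin 2, ∀ b' : Fin m → ℝ, (∀ g, 0 ≤ b' g) →
      ∑ g ∈ roundRobin 2 (Function.update b i b') i, v i g ≤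
        ∑ g ∈ roundRobin 2 b i, v i g) :
    ∀ i j : Fin 2, (roundRobin 2 b j).Nonempty →
      ∃ g ∈ roundRobin 2 b j,
        ∑ x ∈ (roundRobin 2 b j).erase g, v i x ≤ ∑ x ∈ roundRobin 2 b i, v i x := by
  have htotal (b' : Fin 2 → Fin m → ℝ) (i : Fin 2) :
      ∑ x ∈ roundRobin 2 b' 0, v i x + ∑ x ∈ roundRobin 2 b' 1, v i x = ∑ x, v i x := by
    rw [← sum_sum_roundRobin b' (v i), Fin.sum_univ_two]
  rintro i j ⟨g, hg⟩
  obtain rfl | hij := eq_or_ne i j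
  · exact ⟨g, hg, by linarith [sum_erase_eq_sub (f := v i) hg, hv i g]⟩
  obtain ⟨rfl, rfl⟩ | ⟨rfl, rfl⟩ : i = 0 ∧ j = 1 ∨ i = 1 ∧ j = 0 := by omega
  · have hdev :=
      sum_roundRobin_one_le_sum_roundRobin_zero _ _ (hv 0) (Function.update_self 0 (v 0) b)
    refine ⟨g, hg, ?_⟩
    linarith [sum_erase_eq_sub (f := v 0) hg, hv 0 g, hPNE 0 (v 0) (hv 0),
      htotal b 0, htotal (Function.update b 0 (v 0)) 0]
  · obtain ⟨c, -, hc, -⟩ := exists_rrPick_eq_some (b 0) ⟨g, mem_univ g⟩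
    have hc' : rrPick (Function.update b 1 (v 1) 0) univ = some c := by
      rwa [Function.update_of_ne (by decide)]
    have hdev := sum_roundRobin_zero_le_sum_roundRobin_one_add _ _ (hv 1)
      (Function.update_self 1 (v 1) b) hc'
    have hcA := mem_roundRobin_of_rrPick_univ b hc
    refine ⟨c, hcA, ?_⟩
    linarith [sum_erase_eq_sub (f := v 1) hcA, hPNE 1 (v 1) (hv 1),
      htotal b 1, htotal (Function.update b 1 (v 1)) 1]

/-- every pure Nash equilibrium of Round-Robin with two agents induces an
allocation that is EF1 with respect to the true valuations. -/
theorem roundRobin_two_agents_PNE_EF1 {m : ℕ} (v b : Fin 2 → Fin m → ℝ)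
    (hv : ∀ i g, 0 ≤ v i g) (hb : ∀ i g, 0 ≤ b i g)
    (hPNE : ∀ i : Fin 2, ∀ b' : Fin m → ℝ, (∀ g, 0 ≤ b' g) →
      ∑ g ∈ roundRobin 2 (Function.update b i b') i, v i g ≤
        ∑ g ∈ roundRobin 2 b i, v i g) :
    ∀ i j : Fin 2, (roundRobin 2 b j).Nonempty →
      ∃ g ∈ roundRobin 2 b j,
        ∑ x ∈ (roundRobin 2 b j).erase g, v i x ≤ ∑ x ∈ roundRobin 2 b i, v i x :=
  roundRobin_two_agents_PNE_EF1_general v b hv hPNE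
end

section
/- In the 'cut' phase of the Modified Cut-and-Choose mechanism, for any target partition (X_1, X_2) of the goods, agent 1 can report a bid vector that forces the mechanism to construct bundles (E_1, E_2) with {E_1, E_2} = {X_1, X_2}. -/
/-!
Fix the processing order and let `X` be the target part containing the first good. Agent 1
bids `1` on a good exactly when the next good belongs to the other part, and `0` otherwise.
Then, just before each good is processed, the first bundle's bid total exceeds the second's by
`0` if that good belongs to `X` and by `1` otherwise, so every good is sent to its target bundle.
-/

open Finset

/-- The goods sorted in decreasing order of agent 1's true values, ties broken
lexicographically. -/
noncomputable def sortedGoods {m : ℕ} (v1 : Fin m → ℝ) : List (Fin m) :=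
  (List.finRange m).mergeSort
    (fun g h => @decide (v1 h < v1 g ∨ (v1 g = v1 h ∧ g ≤ h)) (Classical.propDecidable _))

/-- The cut phase of Mod-Cut&Choose: goods are processed in decreasing order of agent 1's
true values `v1` (ties lexicographic) and each good is added to the bundle with the smaller
total reported bid `b1` (ties in favor of the first bundle). -/
noncomputable def cutPhase {m : ℕ} (v1 b1 : Fin m → ℝ) : Finset (Fin m) × Finset (Fin m) :=
  (sortedGoods v1).foldl
    (fun E g =>
      if ∑ x ∈ E.1, b1 x ≤ ∑ x ∈ E.2, b1 x then (insert g E.1, E.2) else (E.1, insert g E.2))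
    (∅, ∅)

theorem List.Nodup.exists_nonneg_isChain_eq {α : Type*} [DecidableEq α] {l : List α}
    (hl : l.Nodup) (f : α → α → ℝ) (hf : ∀ a c, 0 ≤ f a c) :
    ∃ b : α → ℝ, (∀ a, 0 ≤ b a) ∧ l.IsChain (fun a c => b a = f a c) := by
  induction l with
  | nil => exact ⟨0, fun _ => le_rfl, List.isChain_nil⟩
  | cons a t ih =>
    obtain ⟨b, hb0, hb⟩ := ih hl.of_cons
    cases t with
    | nil => exact ⟨b, hb0, List.isChain_singleton a⟩
    | cons c t =>
      have hat : a ∉ c :: t := (List.nodup_cons.1 hl).1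
      refine ⟨Function.update b a (f a c), fun x => ?_, List.isChain_cons_cons.2 ⟨by simp, ?_⟩⟩
      · rcases eq_or_ne x a with rfl | hx
        · simpa using hf x c
        · simpa [hx] using hb0 x
      · refine hb.imp_of_mem_imp fun x y hx _ hxy => ?_
        rwa [Function.update_of_ne (ne_of_mem_of_not_mem hx hat)]

section CutStep

variable {α : Type*} [DecidableEq α]

noncomputable def cutStep (b : α → ℝ) (E : Finset α × Finset α) (g : α) : Finset α × Finset α :=
  if ∑ x ∈ E.1, b x ≤ ∑ x ∈ E.2, b x then (insert g E.1, E.2) else (E.1, insert g E.2)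

theorem foldl_cutStep_eq (X : Finset α) (b : α → ℝ) {l : List α} (hl : l.Nodup)
    (hb : l.IsChain (fun a c => b a = if (a ∈ X ↔ c ∈ X) then 0 else 1))
    {E₁ E₂ : Finset α} (hE₁ : ∀ g ∈ l, g ∉ E₁) (hE₂ : ∀ g ∈ l, g ∉ E₂)
    (hhead : ∀ a ∈ l.head?, ∑ x ∈ E₁, b x - ∑ x ∈ E₂, b x = if a ∈ X then 0 else 1) :
    l.foldl (cutStep b) (E₁, E₂) = (E₁ ∪ (l.toFinset ∩ X), E₂ ∪ (l.toFinset \ X)) := by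
  induction l generalizing E₁ E₂ with
  | nil => simp
  | cons a t ih =>
    have hat : a ∉ t := (List.nodup_cons.1 hl).1
    have hdiff := hhead a rfl
    have hba : ∀ c ∈ t.head?, b a = if (a ∈ X ↔ c ∈ X) then 0 else 1 := by
      cases t with
      | nil => simp
      | cons c t => simpa using (List.isChain_cons_cons.1 hb).1
    have hnew : ∀ g ∈ t, g ≠ a := fun g hg => ne_of_mem_of_not_mem hg hat
    have htE₁ : ∀ g ∈ t, g ∉ E₁ := fun g hg => hE₁ g (List.mem_cons_of_mem a hg)
    have htE₂ : ∀ g ∈ t, g ∉ E₂ := fun g hg => hE₂ g (List.mem_cons_of_mem a hg)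
    by_cases haX : a ∈ X
    · have hle : ∑ x ∈ E₁, b x ≤ ∑ x ∈ E₂, b x := by simp only [haX, if_true] at hdiff; linarith
      rw [List.foldl_cons, cutStep, if_pos hle, ih hl.of_cons hb.tail]
      · simp [insert_inter_of_mem haX, insert_sdiff_of_mem _ haX]
      · exact fun g hg => by simp [hnew g hg, htE₁ g hg]
      · exact htE₂
      · intro c hc
        rw [sum_insert (hE₁ a (by simp)), hba c hc]
        by_cases hcX : c ∈ X <;> simp only [haX, hcX, if_true, if_false, iff_self, iff_false,
          not_true_eq_false] at hdiff ⊢ <;> linarith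
    · have hlt : ¬∑ x ∈ E₁, b x ≤ ∑ x ∈ E₂, b x := by
        simp only [haX, if_false] at hdiff; linarith
      rw [List.foldl_cons, cutStep, if_neg hlt, ih hl.of_cons hb.tail]
      · simp [insert_inter_of_notMem haX, insert_sdiff_of_notMem _ haX]
      · exact htE₁
      · exact fun g hg => by simp [hnew g hg, htE₂ g hg]
      · intro c hc
        rw [sum_insert (hE₂ a (by simp)), hba c hc]
        by_cases hcX : c ∈ X <;> simp only [haX, hcX, if_true, if_false, iff_self, false_iff,
          not_true_eq_false] at hdiff ⊢ <;> linarith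

end CutStep

theorem nodup_sortedGoods {m : ℕ} (v1 : Fin m → ℝ) : (sortedGoods v1).Nodup :=
  (List.mergeSort_perm _ _).nodup_iff.2 (List.nodup_finRange m)

theorem toFinset_sortedGoods {m : ℕ} (v1 : Fin m → ℝ) : (sortedGoods v1).toFinset = univ := by
  rw [sortedGoods, List.toFinset_eq_of_perm _ _ (List.mergeSort_perm _ _), List.toFinset_finRange]

theorem cutPhase_eq_foldl_cutStep {m : ℕ} (v1 b1 : Fin m → ℝ) :
    cutPhase v1 b1 = (sortedGoods v1).foldl (cutStep b1) (∅, ∅) :=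
  rfl

theorem exists_cutPhase_eq {m : ℕ} (v1 : Fin m → ℝ) (X : Finset (Fin m))
    (hX : ∀ a ∈ (sortedGoods v1).head?, a ∈ X) :
    ∃ b1 : Fin m → ℝ, (∀ g, 0 ≤ b1 g) ∧ cutPhase v1 b1 = (X, Xᶜ) := by
  obtain ⟨b1, hb1, hchain⟩ := (nodup_sortedGoods v1).exists_nonneg_isChain_eq
    (fun a c => if (a ∈ X ↔ c ∈ X) then 0 else 1) (fun _ _ => by split <;> norm_num)
  refine ⟨b1, hb1, ?_⟩
  rw [cutPhase_eq_foldl_cutStep]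
  have hfold := foldl_cutStep_eq X b1 (nodup_sortedGoods v1) hchain (E₁ := ∅) (E₂ := ∅)
    (by simp) (by simp) (by simpa using hX)
  simpa [toFinset_sortedGoods, compl_eq_univ_sdiff] using hfold

theorem cutPhase_force_any_partition_general {m : ℕ} (v1 : Fin m → ℝ)
    (X₁ X₂ : Finset (Fin m)) (hdisj : Disjoint X₁ X₂) (hcover : X₁ ∪ X₂ = Finset.univ) :
    ∃ b1 : Fin m → ℝ, (∀ g, 0 ≤ b1 g) ∧
      ((cutPhase v1 b1).1 = X₁ ∧ (cutPhase v1 b1).2 = X₂ ∨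
       (cutPhase v1 b1).1 = X₂ ∧ (cutPhase v1 b1).2 = X₁) := by
  have hcompl : IsCompl X₁ X₂ := isCompl_iff.2 ⟨hdisj, codisjoint_iff.2 hcover⟩
  by_cases h₁ : ∀ a ∈ (sortedGoods v1).head?, a ∈ X₁
  · obtain ⟨b1, hb1, hcut⟩ := exists_cutPhase_eq v1 X₁ h₁
    exact ⟨b1, hb1, Or.inl (by simp [hcut, hcompl.compl_eq])⟩
  · have h₂ : ∀ a ∈ (sortedGoods v1).head?, a ∈ X₂ := by
      push Not at h₁
      obtain ⟨a, ha, haX₁⟩ := h₁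
      intro a' ha'
      rw [Option.mem_unique ha' ha]
      exact (mem_union.1 (hcover ▸ mem_univ a)).resolve_left haX₁
    obtain ⟨b1, hb1, hcut⟩ := exists_cutPhase_eq v1 X₂ h₂
    exact ⟨b1, hb1, Or.inr (by simp [hcut, hcompl.symm.compl_eq])⟩

/-- for any target partition (X₁, X₂) of the goods, agent 1 can report a
nonnegative bid vector forcing the cut phase of Mod-Cut&Choose to construct exactly the
bundles {X₁, X₂} (as an unordered pair). -/
theorem cutPhase_force_any_partition {m : ℕ} (v1 : Fin m → ℝ) (hv1 : ∀ g, 0 ≤ v1 g)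
    (X₁ X₂ : Finset (Fin m)) (hdisj : Disjoint X₁ X₂) (hcover : X₁ ∪ X₂ = Finset.univ) :
    ∃ b1 : Fin m → ℝ, (∀ g, 0 ≤ b1 g) ∧
      ((cutPhase v1 b1).1 = X₁ ∧ (cutPhase v1 b1).2 = X₂ ∨
       (cutPhase v1 b1).1 = X₂ ∧ (cutPhase v1 b1).2 = X₁) :=
  cutPhase_force_any_partition_general v1 X₁ X₂ hdisj hcover
end

section
/- For two agents with identical additive valuations over goods h_1,…,h_m (m ≥ 4) where v(h_1) = 1.2, v(h_2) = v(h_3) = 1, and v(h_j) = ε for j ≥ 4 with ε > 0 and (m−3)·ε < 0.2, the only EFX allocations are ({h_1, h_4, …, h_m}, {h_2, h_3}) and ({h_2, h_3}, {h_1, h_4, …, h_m}). -/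
/-!
With identical valuations, the EFX test for a bundle `Y` against its complement reads
`2 v(Y) ≤ v(M) + v(g)` for every positive good `g ∈ Y`, and here `v(M) = 3.2 + (m - 3) ε < 3.4`.
A bundle holding `h₁` together with a unit good is worth at least `2.2`, too much to pass the test
with `g` that unit good; a bundle holding both unit goods and a further good `g` is worth at least
`2 + v(g)`, again too much. So the bundle without `h₁` holds both unit goods and nothing else, and
`{h₂, h₃}` and its complement do pass the test.
-/

open Finset

section

variable {α : Type*} [Fintype α] [DecidableEq α]

/-- The EFX condition, under identical valuations, of the agent holding `Yᶜ` towards `Y`. -/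
def NotEnviedUpToAnyGood (v : α → ℝ) (Y : Finset α) : Prop :=
  ∀ g ∈ Y, 0 < v g → ∑ x ∈ Y.erase g, v x ≤ ∑ x ∈ Yᶜ, v x

variable {v : α → ℝ}

theorem notEnviedUpToAnyGood_iff {Y : Finset α} :
    NotEnviedUpToAnyGood v Y ↔ ∀ g ∈ Y, 0 < v g → 2 * ∑ x ∈ Y, v x ≤ ∑ x, v x + v g := by
  refine forall₂_congr fun g hg => imp_congr_right fun _ => ?_
  have := sum_erase_add Y v hg
  have := sum_add_sum_compl Y v
  constructor <;> intro h <;> linarith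

theorem notMem_of_notEnviedUpToAnyGood (hpos : ∀ x, 0 < v x) (hT : ∑ x, v x < 3.4)
    {a b : α} (ha : v a = 1.2) (hb : v b = 1) {Y : Finset α}
    (hY : NotEnviedUpToAnyGood v Y) (haY : a ∈ Y) : b ∉ Y := by
  intro hbY
  have hab : a ≠ b := ne_of_apply_ne v (by rw [ha, hb]; norm_num)
  have hpair : v a + v b ≤ ∑ x ∈ Y, v x := by
    rw [← sum_pair hab]
    exact sum_le_sum_of_subset_of_nonneg (by simp [insert_subset_iff, haY, hbY])
      fun x _ _ => (hpos x).le
  linarith [notEnviedUpToAnyGood_iff.1 hY b hbY (hpos b)]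

theorem eq_pair_of_notEnviedUpToAnyGood (hpos : ∀ x, 0 < v x) (hT : ∑ x, v x < 3.4)
    {b c : α} (hb : v b = 1) (hc : v c = 1) (hbc : b ≠ c) {Y : Finset α}
    (hY : NotEnviedUpToAnyGood v Y) (hbY : b ∈ Y) (hcY : c ∈ Y) : Y = {b, c} := by
  refine Subset.antisymm (fun g hg => ?_) (by simp [insert_subset_iff, hbY, hcY])
  by_contra hgbc
  have htriple : v g + (v b + v c) ≤ ∑ x ∈ Y, v x := by
    rw [← sum_pair hbc, ← sum_insert hgbc]
    exact sum_le_sum_of_subset_of_nonneg (by simp [insert_subset_iff, hg, hbY, hcY])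
      fun x _ _ => (hpos x).le
  linarith [notEnviedUpToAnyGood_iff.1 hY g hg (hpos g), hpos g]

theorem eq_compl_pair_of_notEnviedUpToAnyGood (hpos : ∀ x, 0 < v x) (hT : ∑ x, v x < 3.4)
    {a b c : α} (ha : v a = 1.2) (hb : v b = 1) (hc : v c = 1) (hbc : b ≠ c) {Y : Finset α}
    (hY : NotEnviedUpToAnyGood v Y) (hYc : NotEnviedUpToAnyGood v Yᶜ) (haY : a ∈ Y) :
    Y = {b, c}ᶜ := by
  rw [← compl_compl Y, compl_inj_iff]
  exact eq_pair_of_notEnviedUpToAnyGood hpos hT hb hc hbc hYc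
    (mem_compl.2 (notMem_of_notEnviedUpToAnyGood hpos hT ha hb hY haY))
    (mem_compl.2 (notMem_of_notEnviedUpToAnyGood hpos hT ha hc hY haY))

theorem notEnviedUpToAnyGood_pair {b c : α} (hb : v b = 1) (hc : v c = 1) (hbc : b ≠ c)
    (hT : 3 ≤ ∑ x, v x) : NotEnviedUpToAnyGood v {b, c} := by
  rw [notEnviedUpToAnyGood_iff, sum_pair hbc]
  intro g hg _
  obtain rfl | rfl : g = b ∨ g = c := by simpa using hg
  all_goals linarith

theorem notEnviedUpToAnyGood_compl_pair {b c : α} (hb : v b = 1) (hc : v c = 1) (hbc : b ≠ c)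
    (hT : ∑ x, v x ≤ 4) : NotEnviedUpToAnyGood v {b, c}ᶜ := by
  rw [notEnviedUpToAnyGood_iff]
  intro g _ hg
  have := sum_add_sum_compl {b, c} v
  rw [sum_pair hbc] at this
  linarith

theorem notEnviedUpToAnyGood_and_compl_iff (hpos : ∀ x, 0 < v x) (hT : ∑ x, v x < 3.4)
    {a b c : α} (ha : v a = 1.2) (hb : v b = 1) (hc : v c = 1) (hbc : b ≠ c) {Y : Finset α} :
    NotEnviedUpToAnyGood v Y ∧ NotEnviedUpToAnyGood v Yᶜ ↔ Y = {b, c}ᶜ ∨ Y = {b, c} := by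
  have hT3 : 3 ≤ ∑ x, v x := by
    have haY : a ∈ ({b, c} : Finset α)ᶜ := by
      have hab : a ≠ b := ne_of_apply_ne v (by rw [ha, hb]; norm_num)
      have hac : a ≠ c := ne_of_apply_ne v (by rw [ha, hc]; norm_num)
      simp [hab, hac]
    have := single_le_sum (fun x _ => (hpos x).le) haY
    have := sum_add_sum_compl {b, c} v
    rw [sum_pair hbc] at this
    linarith
  constructor
  · rintro ⟨hY, hYc⟩
    by_cases haY : a ∈ Y
    · exact .inl (eq_compl_pair_of_notEnviedUpToAnyGood hpos hT ha hb hc hbc hY hYc haY)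
    · refine .inr (compl_inj_iff.1 ?_)
      exact eq_compl_pair_of_notEnviedUpToAnyGood hpos hT ha hb hc hbc hYc
        (by rwa [compl_compl]) (mem_compl.2 haY)
  · have hpair := notEnviedUpToAnyGood_pair hb hc hbc hT3
    have hcompl := notEnviedUpToAnyGood_compl_pair hb hc hbc (by linarith)
    rintro (rfl | rfl)
    · exact ⟨hcompl, by rwa [compl_compl]⟩
    · exact ⟨hpair, hcompl⟩

end

/-- The good `h_j` is `j - 1 : Fin m`; agent 1 receives `A`, agent 2 receives `Aᶜ`. -/
theorem efx_allocations_of_special_instance (m : ℕ) (hm : 4 ≤ m)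
    (ε : ℝ) (hε : 0 < ε) (hεsmall : (m - 3 : ℕ) * ε < 0.2)
    (v : Fin m → ℝ)
    (hv0 : v ⟨0, by omega⟩ = 1.2)
    (hv1 : v ⟨1, by omega⟩ = 1)
    (hv2 : v ⟨2, by omega⟩ = 1)
    (hvrest : ∀ j : Fin m, 3 ≤ (j : ℕ) → v j = ε)
    (A : Finset (Fin m)) :
    ((∀ g ∈ Aᶜ, 0 < v g → ∑ x ∈ Aᶜ.erase g, v x ≤ ∑ x ∈ A, v x) ∧
     (∀ g ∈ A, 0 < v g → ∑ x ∈ A.erase g, v x ≤ ∑ x ∈ Aᶜ, v x)) ↔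
    (A = ({⟨1, by omega⟩, ⟨2, by omega⟩} : Finset (Fin m))ᶜ ∨
     A = ({⟨1, by omega⟩, ⟨2, by omega⟩} : Finset (Fin m))) := by
  have hpos : ∀ j, 0 < v j := by
    rintro ⟨_ | _ | _ | j, hj⟩
    · rw [hv0]; norm_num
    · rw [hv1]; norm_num
    · rw [hv2]; norm_num
    · rw [hvrest _ (by simp)]; exact hε
  have hT : ∑ x, v x < 3.4 := by
    set S : Finset (Fin m) := {⟨0, by omega⟩, ⟨1, by omega⟩, ⟨2, by omega⟩}
    have hS : ∑ x ∈ S, v x = 3.2 := by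
      rw [sum_insert (by simp [Fin.ext_iff]), sum_pair (by simp [Fin.ext_iff]), hv0, hv1, hv2]
      norm_num
    have hcard : #Sᶜ = m - 3 := by
      rw [card_compl, Fintype.card_fin, card_insert_of_notMem (by simp [Fin.ext_iff]),
        card_pair (by simp [Fin.ext_iff])]
    have hrest : ∑ x ∈ Sᶜ, v x = (m - 3 : ℕ) * ε := by
      rw [sum_congr rfl fun j hj => hvrest j ?_, sum_const, hcard, nsmul_eq_mul]
      simp only [S, mem_compl, mem_insert, mem_singleton, Fin.ext_iff] at hj
      omega
    rw [← sum_add_sum_compl S v, hS, hrest]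
    linarith
  have hv12 : (⟨1, by omega⟩ : Fin m) ≠ ⟨2, by omega⟩ := by simp [Fin.ext_iff]
  rw [← notEnviedUpToAnyGood_and_compl_iff hpos hT hv0 hv1 hv2 hv12, and_comm]
  simp only [NotEnviedUpToAnyGood, compl_compl]
end

section
/- For any additive valuation v_i over a finite set M that may assign equal values to distinct goods, there exists an additive valuation v'_i inducing a strict preference ranking consistent with that of v_i, such that v_i(T) ≤ v'_i(T) ≤ v_i(T) + ε/3 for every subset T ⊆ M, where ε is the smallest positive difference between v_i-values of two goods (or 1 if no such positive difference exists). -/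
/-- any additive valuation can be perturbed into one inducing a strict
preference ranking consistent with the original, increasing the value of every bundle by at
most ε/3, where ε is the smallest positive difference between values of two goods (or 1 if
all goods have equal value). -/
theorem exists_strict_perturbation {G : Type} [Fintype G] [DecidableEq G]
    (v : G → ℝ) (hv : ∀ g, 0 ≤ v g) (ε : ℝ)
    (hε₁ : (∃ g h : G, v g ≠ v h) →
      ε = sInf {x : ℝ | ∃ g h : G, v g ≠ v h ∧ x = |v g - v h|})
    (hε₂ : (¬ ∃ g h : G, v g ≠ v h) → ε = 1) :
    ∃ v' : G → ℝ, Function.Injective v' ∧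
      (∀ g h : G, v h < v g → v' h < v' g) ∧
      (∀ T : Finset G, ∑ g ∈ T, v g ≤ ∑ g ∈ T, v' g ∧
        ∑ g ∈ T, v' g ≤ ∑ g ∈ T, v g + ε / 3) := by
  classical
  set S : Set ℝ := {x : ℝ | ∃ g h : G, v g ≠ v h ∧ x = |v g - v h|} with hS
  have hSfin : S.Finite := by
    have hsub : S ⊆ (fun p : G × G => |v p.1 - v p.2|) '' Set.univ := by
      rintro x ⟨g, h, _, rfl⟩; exact ⟨(g, h), trivial, rfl⟩
    exact Set.Finite.subset (Set.Finite.image _ Set.finite_univ) hsub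
  have hSbdd : BddBelow S := by
    refine ⟨0, ?_⟩
    rintro x ⟨g, h, _, rfl⟩
    exact abs_nonneg _
  have hεpos : 0 < ε := by
    by_cases hex : ∃ g h : G, v g ≠ v h
    · rw [hε₁ hex]
      have hne : S.Nonempty := by
        obtain ⟨g, h, hgh⟩ := hex; exact ⟨|v g - v h|, g, h, hgh, rfl⟩
      obtain ⟨g, h, hgh, hx⟩ := hne.csInf_mem hSfin
      rw [hx]
      exact abs_pos.mpr (sub_ne_zero.mpr hgh)
    · rw [hε₂ hex]; norm_num
  have hεle : ∀ g h : G, v h < v g → ε ≤ v g - v h := by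
    intro g h hlt
    have hex : ∃ g h : G, v g ≠ v h := ⟨g, h, ne_of_gt hlt⟩
    rw [hε₁ hex]
    have hmem : v g - v h ∈ S :=
      ⟨g, h, ne_of_gt hlt, (abs_of_pos (sub_pos.mpr hlt)).symm⟩
    exact csInf_le hSbdd hmem
  set n : ℕ := Fintype.card G with hn
  set c : ℝ := ε / (3 * (n : ℝ) ^ 2) with hc
  have hc0 : 0 ≤ c := by positivity
  set e : G → ℝ := fun g => ((Fintype.equivFin G g : ℕ) : ℝ) with he
  have he0 : ∀ g, 0 ≤ e g := fun g => Nat.cast_nonneg _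
  have heLt : ∀ g, e g < (n : ℝ) := by
    intro g
    simp only [he, hn]
    exact_mod_cast (Fintype.equivFin G g).isLt
  set v' : G → ℝ := fun g => v g + c * e g with hv'
  -- if G is inhabited, c is positive and c * 3n² = ε
  have hcpos : ∀ _ : G, 0 < c := by
    intro g
    have hn1 : 0 < n := Fintype.card_pos_iff.mpr ⟨g⟩
    have : (0:ℝ) < (n:ℝ) := by exact_mod_cast hn1
    positivity
  have hcε : ∀ _ : G, c * (3 * (n : ℝ) ^ 2) = ε := by
    intro g
    have hn1 : 0 < n := Fintype.card_pos_iff.mpr ⟨g⟩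
    have hnne : (3 * (n:ℝ)^2) ≠ 0 := by
      have : (0:ℝ) < (n:ℝ) := by exact_mod_cast hn1
      positivity
    rw [hc]; field_simp
  have hord : ∀ g h : G, v h < v g → v' h < v' g := by
    intro g h hlt
    have hle := hεle g h hlt
    have hcp := hcpos g
    have hcε' := hcε g
    have h1 : e h < (n:ℝ) := heLt h
    have h2 : 0 ≤ e g := he0 g
    have hn1 : (1:ℝ) ≤ (n:ℝ) := by
      exact_mod_cast Fintype.card_pos_iff.mpr ⟨g⟩
    have hch : c * e h < c * (n:ℝ) := by
      exact mul_lt_mul_of_pos_left h1 hcp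
    have hcn : c * (n:ℝ) < ε := by
      nlinarith
    have : c * e h < ε := lt_trans hch hcn
    simp only [hv']
    nlinarith
  refine ⟨v', ?_, hord, ?_⟩
  · intro g h hgh
    by_contra hne
    rcases lt_trichotomy (v g) (v h) with hlt | heq | hlt
    · exact absurd hgh (ne_of_lt (hord h g hlt))
    · have hcp := hcpos g
      have hee : c * e g = c * e h := by
        simp only [hv'] at hgh; linarith
      have : e g = e h := mul_left_cancel₀ (ne_of_gt hcp) hee
      have : (Fintype.equivFin G g : ℕ) = (Fintype.equivFin G h : ℕ) := by
        simp only [he] at this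
        exact_mod_cast this
      exact hne ((Fintype.equivFin G).injective (Fin.val_injective this))
    · exact absurd hgh.symm (ne_of_lt (hord g h hlt))
  · intro T
    constructor
    · apply Finset.sum_le_sum
      intro g _
      have : 0 ≤ c * e g := mul_nonneg hc0 (he0 g)
      simp only [hv']; linarith
    · have hsum : ∑ g ∈ T, v' g = ∑ g ∈ T, v g + ∑ g ∈ T, c * e g := by
        simp only [hv']; rw [Finset.sum_add_distrib]
      rw [hsum]
      have hbound : ∑ g ∈ T, c * e g ≤ (T.card : ℝ) * (c * (n:ℝ)) := by
        calc ∑ g ∈ T, c * e g ≤ ∑ _g ∈ T, c * (n:ℝ) := by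
              apply Finset.sum_le_sum
              intro g _
              exact mul_le_mul_of_nonneg_left (le_of_lt (heLt g)) hc0
          _ = (T.card : ℝ) * (c * (n:ℝ)) := by
              rw [Finset.sum_const, nsmul_eq_mul]
      have hcard : (T.card : ℝ) ≤ (n:ℝ) := by
        exact_mod_cast Finset.card_le_card (Finset.subset_univ T)
      have hfin : (n:ℝ) * (c * (n:ℝ)) ≤ ε / 3 := by
        rcases Nat.eq_zero_or_pos n with h0 | hpos
        · rw [h0]; simp; positivity
        · have hg : G := by
            have := Fintype.card_pos_iff.mp (hn ▸ hpos)
            exact Classical.choice this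
          have := hcε hg
          nlinarith
      have h1 : (T.card : ℝ) * (c * (n:ℝ)) ≤ (n:ℝ) * (c * (n:ℝ)) := by
        apply mul_le_mul_of_nonneg_right hcard
        positivity
      linarith
end
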